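/- Let P : ℝ → ℝ be differentiable on [0,∞) with P(0) > 0, and suppose there exist constants f_m and κ > 0 such that P'(t) ≥ (f_m − P(t)/κ) · P(t) for all t ≥ 0. Then P(t) > 0 for all t ≥ 0. -/
import Mathlib


theorem stmt_1 (P P' : ℝ → ℝ) (f_m κ : ℝ) (hκ : 0 < κ)
    (hP0 : 0 < P 0)
    (hderiv : ∀ t ∈ Set.Ici (0:ℝ), HasDerivWithinAt P (P' t) (Set.Ici 0) t)
    (hineq : ∀ t ∈ Set.Ici (0:ℝ), P' t ≥ (f_m - P t / κ) * P t) :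
    ∀ t ∈ Set.Ici (0:ℝ), 0 < P t := by
  have hcont : ContinuousOn P (Set.Ici (0:ℝ)) :=
    fun s hs => (hderiv s hs).continuousWithinAt
  by_contra h
  push_neg at h
  obtain ⟨t, ht, hPt⟩ := h
  have ht0 : (0:ℝ) ≤ t := ht
  set S : Set ℝ := Set.Icc 0 t ∩ P ⁻¹' Set.Iic 0 with hS
  have hScl : IsClosed S :=
    (hcont.mono Set.Icc_subset_Ici_self).preimage_isClosed_of_isClosed
      isClosed_Icc isClosed_Iic
  have hSne : S.Nonempty := ⟨t, ⟨ht0, le_refl t⟩, hPt⟩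
  have hSbdd : BddBelow S := ⟨0, fun s hs => hs.1.1⟩
  set t₁ := sInf S with ht₁
  have ht₁S : t₁ ∈ S := hScl.csInf_mem hSne hSbdd
  have ht₁0 : 0 ≤ t₁ := ht₁S.1.1
  have ht₁t : t₁ ≤ t := ht₁S.1.2
  have hPt₁ : P t₁ ≤ 0 := ht₁S.2
  -- P is positive on [0, t₁)
  have hpos : ∀ s ∈ Set.Ico (0:ℝ) t₁, 0 < P s := by
    intro s hs
    by_contra hsP
    push_neg at hsP
    have : s ∈ S := ⟨⟨hs.1, hs.2.le.trans ht₁t⟩, hsP⟩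
    exact absurd (csInf_le hSbdd this) (not_le.mpr hs.2)
  -- bound P above on [0, t₁]
  obtain ⟨M, hM⟩ : ∃ M, ∀ s ∈ Set.Icc (0:ℝ) t₁, P s ≤ M := by
    obtain ⟨x, hx, hxmax⟩ := IsCompact.exists_isMaxOn isCompact_Icc ⟨0, le_refl 0, ht₁0⟩
      (hcont.mono Set.Icc_subset_Ici_self)
    exact ⟨P x, hxmax⟩
  set C : ℝ := |f_m| + M / κ with hC
  set g : ℝ → ℝ := fun s => P s * Real.exp (C * s) with hg
  have hgc : ContinuousOn g (Set.Icc 0 t₁) :=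
    (hcont.mono Set.Icc_subset_Ici_self).mul
      (Real.continuous_exp.comp (continuous_const.mul continuous_id)).continuousOn
  have hmono : MonotoneOn g (Set.Icc 0 t₁) := by
    apply monotoneOn_of_hasDerivWithinAt_nonneg (convex_Icc 0 t₁) hgc
      (f' := fun s => P' s * Real.exp (C * s) + P s * (Real.exp (C * s) * C))
    · intro x hx
      rw [interior_Icc] at hx
      have hx0 : (0:ℝ) < x := hx.1
      have hPd : HasDerivAt P (P' x) x :=
        (hderiv x hx0.le).hasDerivAt (Ici_mem_nhds hx0)
      have hed : HasDerivAt (fun s => Real.exp (C * s)) (Real.exp (C * x) * C) x := by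
        have h1 : HasDerivAt (fun s : ℝ => C * s) C x := by
          simpa using (hasDerivAt_id x).const_mul C
        simpa using h1.exp
      exact (hPd.mul hed).hasDerivWithinAt
    · intro x hx
      rw [interior_Icc] at hx
      have hPx : 0 < P x := hpos x ⟨hx.1.le, hx.2⟩
      have hPxM : P x ≤ M := hM x ⟨hx.1.le, hx.2.le⟩
      have h1 : P' x ≥ (f_m - P x / κ) * P x := hineq x hx.1.le
      have h2 : f_m - P x / κ ≥ -C := by
        have hdiv : P x / κ ≤ M / κ := (div_le_div_iff_of_pos_right hκ).mpr hPxM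
        have habs : -|f_m| ≤ f_m := neg_abs_le f_m
        simp only [hC]
        linarith
      have hexp : 0 < Real.exp (C * x) := Real.exp_pos _
      have h3 : -C * P x ≤ P' x :=
        le_trans (mul_le_mul_of_nonneg_right h2 hPx.le) h1
      have h4 : 0 ≤ P' x + C * P x := by linarith
      have h5 : P' x * Real.exp (C * x) + P x * (Real.exp (C * x) * C)
          = (P' x + C * P x) * Real.exp (C * x) := by ring
      rw [h5]
      exact mul_nonneg h4 hexp.le
  have h01 : g 0 ≤ g t₁ := hmono ⟨le_refl 0, ht₁0⟩ ⟨ht₁0, le_refl t₁⟩ ht₁0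
  have hg0 : g 0 = P 0 := by simp [hg]
  have hgt₁ : g t₁ ≤ 0 :=
    mul_nonpos_of_nonpos_of_nonneg hPt₁ (Real.exp_pos _).le
  linarith [hg0 ▸ h01]
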